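/- arXiv:2308.01986 — 3 statements merged into one kernel-verified Lean document; each statement's English description precedes it below -/
import Mathlib

section
/- Let M be a d × d matrix over ZMod 2 that is symmetric with zero diagonal, and let r = rank(M). Then r is even and there exists an invertible d × d matrix L over ZMod 2 such that L · M · Lᵀ is the block-diagonal matrix consisting of r/2 copies of the 2×2 block [[0,1],[1,0]] followed by a (d−r) × (d−r) zero block. -/
open Matrix

namespace SZD

/-- The normal form with `k` hyperbolic blocks. -/
def NF (n k : ℕ) : Matrix (Fin n) (Fin n) (ZMod 2) :=
  Matrix.of fun i j : Fin n =>
    if (i : ℕ) < 2*k ∧ (j : ℕ) < 2*k ∧ (i : ℕ) / 2 = (j : ℕ) / 2 ∧ i ≠ j then 1 else 0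

lemma matrix_add_self {m n : Type*} (A : Matrix m n (ZMod 2)) : A + A = 0 := by
  ext i j
  simp [CharTwo.add_self_eq_zero]

lemma congr_symm {α : Type*} [Fintype α] {n : Type*} [Fintype n]
    (A : Matrix α n (ZMod 2)) (M : Matrix n n (ZMod 2)) (hs : Mᵀ = M) :
    (A * M * Aᵀ)ᵀ = A * M * Aᵀ := by
  rw [transpose_mul, transpose_mul, transpose_transpose, hs, Matrix.mul_assoc]

lemma congr_diag {α : Type*} [Fintype α] {n : Type*} [Fintype n]
    (A : Matrix α n (ZMod 2)) (M : Matrix n n (ZMod 2)) (hs : Mᵀ = M)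
    (hd : ∀ i, M i i = 0) (i : α) : (A * M * Aᵀ) i i = 0 := by
  have hsym : ∀ a b, M b a = M a b := fun a b => (congrFun (congrFun hs b) a).symm
  rw [mul_apply]
  simp only [mul_apply, transpose_apply, Finset.sum_mul]
  rw [← Finset.sum_product']
  apply Finset.sum_ninvolution Prod.swap
  · rintro ⟨a, b⟩
    simp only [Prod.swap]
    rw [hsym a b]
    ring_nf
    rw [show (2 : ZMod 2) = 0 from rfl]
    ring
  · rintro ⟨a, b⟩ h
    simp only [Prod.swap, ne_eq, Prod.mk.injEq, not_and]
    intro hba hab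
    subst hba
    exact h (by rw [hd]; ring)
  · rintro ⟨a, b⟩; simp
  · rintro ⟨a, b⟩; rfl

/-! ### Rank of the normal form -/

def pairf (n k : ℕ) (hk : 2*k ≤ n) : Fin n → Fin n := fun i =>
  if h : (i : ℕ) < 2*k then
    ⟨if (i : ℕ) % 2 = 0 then (i : ℕ) + 1 else (i : ℕ) - 1, by split_ifs <;> omega⟩
  else i

lemma pairf_val (n k : ℕ) (hk : 2*k ≤ n) (i : Fin n) :
    ((pairf n k hk i : Fin n) : ℕ) =
      if (i : ℕ) < 2*k then (if (i : ℕ) % 2 = 0 then (i : ℕ) + 1 else (i : ℕ) - 1)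
      else (i : ℕ) := by
  unfold pairf
  split_ifs <;> rfl

lemma pairf_involutive (n k : ℕ) (hk : 2*k ≤ n) : Function.Involutive (pairf n k hk) := by
  intro i
  apply Fin.ext
  rw [pairf_val, pairf_val]
  split_ifs <;> omega

def pairPerm (n k : ℕ) (hk : 2*k ≤ n) : Equiv.Perm (Fin n) :=
  (pairf_involutive n k hk).toPerm

lemma NF_eq_perm_diag (n k : ℕ) (hk : 2*k ≤ n) :
    NF n k = (diagonal (fun i : Fin n => if (i : ℕ) < 2*k then (1 : ZMod 2) else 0)).submatrix
      (pairPerm n k hk) (Equiv.refl (Fin n)) := by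
  ext i j
  simp only [NF, of_apply, submatrix_apply, Equiv.refl_apply, diagonal_apply, pairPerm,
    Function.Involutive.coe_toPerm, Fin.ext_iff, ne_eq, pairf_val]
  split_ifs <;> first | rfl | omega

lemma card_lt_subtype (n k : ℕ) (hk : 2*k ≤ n) :
    Fintype.card {i : Fin n // ¬((if (i : ℕ) < 2*k then (1 : ZMod 2) else 0) = 0)} = 2*k := by
  have he : {i : Fin n // ¬((if (i : ℕ) < 2*k then (1 : ZMod 2) else 0) = 0)} ≃ Fin (2*k) :=
    { toFun := fun x => ⟨(x.1 : ℕ), by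
        rcases x with ⟨i, hi⟩
        by_contra hc
        simp only [not_lt] at hc
        rw [if_neg (by omega)] at hi
        exact hi rfl⟩
      invFun := fun j => ⟨⟨(j : ℕ), lt_of_lt_of_le j.2 hk⟩, by
        simp only [j.2, if_pos]
        exact one_ne_zero⟩
      left_inv := fun x => by ext; rfl
      right_inv := fun j => by ext; rfl }
  rw [Fintype.card_congr he, Fintype.card_fin]

lemma rank_NF (n k : ℕ) (hk : 2*k ≤ n) : (NF n k).rank = 2*k := by
  rw [NF_eq_perm_diag n k hk, rank_submatrix, rank_diagonal]
  exact card_lt_subtype n k hk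

/-! ### The clearing matrix -/

lemma row_one {n : ℕ} {L : Matrix (Fin n) (Fin n) (ZMod 2)} {a : Fin n}
    (h : ∀ b, L a b = (1 : Matrix (Fin n) (Fin n) (ZMod 2)) a b)
    (X : Matrix (Fin n) (Fin n) (ZMod 2)) (b : Fin n) : (L * X) a b = X a b := by
  rw [mul_apply]
  simp_rw [h]
  rw [← mul_apply, Matrix.one_mul]

lemma col_one {n : ℕ} {L : Matrix (Fin n) (Fin n) (ZMod 2)} {a : Fin n}
    (h : ∀ b, L a b = (1 : Matrix (Fin n) (Fin n) (ZMod 2)) a b)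
    (X : Matrix (Fin n) (Fin n) (ZMod 2)) (b : Fin n) : (X * Lᵀ) b a = X b a := by
  rw [mul_apply]
  simp_rw [transpose_apply, h]
  have h2 : ∀ c, (1 : Matrix (Fin n) (Fin n) (ZMod 2)) a c
      = (1 : Matrix (Fin n) (Fin n) (ZMod 2)) c a := by
    intro c
    by_cases hca : a = c
    · subst hca; rfl
    · rw [one_apply_ne hca, one_apply_ne (Ne.symm hca)]
  simp_rw [h2]
  rw [← mul_apply, Matrix.mul_one]

def Cmat {n : ℕ} (N : Matrix (Fin n) (Fin n) (ZMod 2)) (e0 e1 : Fin n) :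
    Matrix (Fin n) (Fin n) (ZMod 2) :=
  Matrix.of fun a b =>
    if b = e0 ∧ a ≠ e0 ∧ a ≠ e1 then N a e1
    else if b = e1 ∧ a ≠ e0 ∧ a ≠ e1 then N a e0 else 0

/-- The clearing matrix. -/
def L1m {n : ℕ} (N : Matrix (Fin n) (Fin n) (ZMod 2)) (e0 e1 : Fin n) :
    Matrix (Fin n) (Fin n) (ZMod 2) :=
  1 + Cmat N e0 e1

lemma Cmat_row0 {n : ℕ} (N : Matrix (Fin n) (Fin n) (ZMod 2)) (e0 e1 : Fin n) (b : Fin n) :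
    Cmat N e0 e1 e0 b = 0 := by simp [Cmat]

lemma Cmat_row1 {n : ℕ} (N : Matrix (Fin n) (Fin n) (ZMod 2)) (e0 e1 : Fin n) (b : Fin n) :
    Cmat N e0 e1 e1 b = 0 := by simp [Cmat]

lemma L1_row0 {n : ℕ} (N : Matrix (Fin n) (Fin n) (ZMod 2)) (e0 e1 : Fin n) (b : Fin n) :
    L1m N e0 e1 e0 b = (1 : Matrix (Fin n) (Fin n) (ZMod 2)) e0 b := by
  rw [L1m, Matrix.add_apply, Cmat_row0, add_zero]

lemma L1_row1 {n : ℕ} (N : Matrix (Fin n) (Fin n) (ZMod 2)) (e0 e1 : Fin n) (b : Fin n) :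
    L1m N e0 e1 e1 b = (1 : Matrix (Fin n) (Fin n) (ZMod 2)) e1 b := by
  rw [L1m, Matrix.add_apply, Cmat_row1, add_zero]

lemma Cmat_sq {n : ℕ} (N : Matrix (Fin n) (Fin n) (ZMod 2)) (e0 e1 : Fin n) :
    Cmat N e0 e1 * Cmat N e0 e1 = 0 := by
  ext a b
  rw [mul_apply, Matrix.zero_apply]
  apply Finset.sum_eq_zero
  intro c _
  by_cases hc0 : c = e0
  · rw [hc0, Cmat_row0, mul_zero]
  · by_cases hc1 : c = e1
    · rw [hc1, Cmat_row1, mul_zero]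
    · have : Cmat N e0 e1 a c = 0 := by simp [Cmat, hc0, hc1]
      rw [this, zero_mul]

lemma L1_sq {n : ℕ} (N : Matrix (Fin n) (Fin n) (ZMod 2)) (e0 e1 : Fin n) :
    L1m N e0 e1 * L1m N e0 e1 = 1 := by
  rw [L1m, mul_add, mul_one, add_mul, one_mul, Cmat_sq, add_zero, add_assoc,
    matrix_add_self, add_zero]

lemma fact1 {n : ℕ} (N : Matrix (Fin n) (Fin n) (ZMod 2)) (e0 e1 : Fin n)
    (x y : Fin n) (hx : x = e0 ∨ x = e1) (hy : y = e0 ∨ y = e1) :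
    (L1m N e0 e1 * N * (L1m N e0 e1)ᵀ) x y = N x y := by
  rcases hx with hx | hx <;> rcases hy with hy | hy <;> rw [hx, hy] <;>
    first
      | rw [col_one (L1_row0 N e0 e1), row_one (L1_row0 N e0 e1)]
      | rw [col_one (L1_row1 N e0 e1), row_one (L1_row0 N e0 e1)]
      | rw [col_one (L1_row0 N e0 e1), row_one (L1_row1 N e0 e1)]
      | rw [col_one (L1_row1 N e0 e1), row_one (L1_row1 N e0 e1)]

lemma fact2 {n : ℕ} (N : Matrix (Fin n) (Fin n) (ZMod 2)) (hs : Nᵀ = N)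
    (hd : ∀ i, N i i = 0) (e0 e1 : Fin n) (hne : e0 ≠ e1) (h01 : N e0 e1 = 1)
    (a : Fin n) (ha0 : a ≠ e0) (ha1 : a ≠ e1) :
    (L1m N e0 e1 * N * (L1m N e0 e1)ᵀ) a e0 = 0 ∧
    (L1m N e0 e1 * N * (L1m N e0 e1)ᵀ) a e1 = 0 := by
  have h10 : N e1 e0 = 1 := by
    rw [← show Nᵀ e1 e0 = N e1 e0 from congrFun (congrFun hs e1) e0]; exact h01
  have hterm : ∀ y c : Fin n, Cmat N e0 e1 a c * N c y =
      (if c = e0 then N a e1 * N c y else 0) + (if c = e1 then N a e0 * N c y else 0) := by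
    intro y c
    by_cases h1 : c = e0
    · rw [h1, if_pos rfl, if_neg hne, add_zero,
        show Cmat N e0 e1 a e0 = N a e1 by simp [Cmat, ha0, ha1]]
    · by_cases h2 : c = e1
      · rw [h2, if_neg (Ne.symm hne), if_pos rfl, zero_add,
          show Cmat N e0 e1 a e1 = N a e0 by simp [Cmat, ha0, ha1, Ne.symm hne]]
      · rw [if_neg h1, if_neg h2, add_zero,
          show Cmat N e0 e1 a c = 0 by simp [Cmat, h1, h2], zero_mul]
  have hBsum : ∀ y : Fin n, (∑ c, Cmat N e0 e1 a c * N c y)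
      = N a e1 * N e0 y + N a e0 * N e1 y := by
    intro y
    simp_rw [hterm y]
    rw [Finset.sum_add_distrib, Finset.sum_ite_eq' Finset.univ e0,
      Finset.sum_ite_eq' Finset.univ e1]
    simp
  have hmain : ∀ y : Fin n, (L1m N e0 e1 * N) a y
      = N a y + (N a e1 * N e0 y + N a e0 * N e1 y) := by
    intro y
    rw [L1m, mul_apply]
    simp_rw [Matrix.add_apply, add_mul]
    rw [Finset.sum_add_distrib, hBsum y]
    congr 1
    rw [← mul_apply, Matrix.one_mul]
  constructor
  · rw [col_one (L1_row0 N e0 e1), hmain e0, hd e0, h10, mul_zero, zero_add, mul_one,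
      CharTwo.add_self_eq_zero]
  · rw [col_one (L1_row1 N e0 e1), hmain e1, hd e1, h01, mul_one, mul_zero, add_zero,
      CharTwo.add_self_eq_zero]

/-! ### Reindexing -/

def eqv (m : ℕ) {n : ℕ} (hn : n = 2 + m) : Fin n ≃ Fin 2 ⊕ Fin m :=
  (finCongr hn).trans finSumFinEquiv.symm

lemma eqv_val0 {m n : ℕ} (hn : n = 2 + m) (s : Fin 2) :
    (((eqv m hn).symm (Sum.inl s) : Fin n) : ℕ) = (s : ℕ) := by
  simp [eqv]

lemma eqv_val1 {m n : ℕ} (hn : n = 2 + m) (t : Fin m) :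
    (((eqv m hn).symm (Sum.inr t) : Fin n) : ℕ) = 2 + (t : ℕ) := by
  simp [eqv]

def Jf : Matrix (Fin 2) (Fin 2) (ZMod 2) :=
  Matrix.of fun s t => if s = t then 0 else 1

lemma final_reindex (m k' : ℕ) {n : ℕ} (hn : n = 2 + m) :
    (fromBlocks Jf 0 0 (NF m k')).submatrix ⇑(eqv m hn) ⇑(eqv m hn) = NF n (k'+1) := by
  ext i j
  rw [submatrix_apply]
  rcases hsi : (eqv m hn) i with s | s <;> rcases hsj : (eqv m hn) j with t | t
  · have hieq : i = (eqv m hn).symm (Sum.inl s) := by rw [← hsi, Equiv.symm_apply_apply]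
    have hjeq : j = (eqv m hn).symm (Sum.inl t) := by rw [← hsj, Equiv.symm_apply_apply]
    subst hieq; subst hjeq
    rw [fromBlocks_apply₁₁]
    simp only [NF, of_apply, eqv_val0, ne_eq, EmbeddingLike.apply_eq_iff_eq, Sum.inl.injEq]
    have hs2 := s.isLt
    have ht2 := t.isLt
    by_cases hst : s = t
    · subst hst
      rw [if_neg (by simp)]
      simp [Jf]
    · rw [if_pos ⟨by omega, by omega, by omega, hst⟩]
      simp [Jf, hst]
  · have hieq : i = (eqv m hn).symm (Sum.inl s) := by rw [← hsi, Equiv.symm_apply_apply]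
    have hjeq : j = (eqv m hn).symm (Sum.inr t) := by rw [← hsj, Equiv.symm_apply_apply]
    subst hieq; subst hjeq
    rw [fromBlocks_apply₁₂, Matrix.zero_apply]
    simp only [NF, of_apply, eqv_val0, eqv_val1]
    rw [if_neg]
    rintro ⟨h1, h2, h3, h4⟩
    have hs2 := s.isLt
    omega
  · have hieq : i = (eqv m hn).symm (Sum.inr s) := by rw [← hsi, Equiv.symm_apply_apply]
    have hjeq : j = (eqv m hn).symm (Sum.inl t) := by rw [← hsj, Equiv.symm_apply_apply]
    subst hieq; subst hjeq
    rw [fromBlocks_apply₂₁, Matrix.zero_apply]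
    simp only [NF, of_apply, eqv_val0, eqv_val1]
    rw [if_neg]
    rintro ⟨h1, h2, h3, h4⟩
    have ht2 := t.isLt
    omega
  · have hieq : i = (eqv m hn).symm (Sum.inr s) := by rw [← hsi, Equiv.symm_apply_apply]
    have hjeq : j = (eqv m hn).symm (Sum.inr t) := by rw [← hsj, Equiv.symm_apply_apply]
    subst hieq; subst hjeq
    rw [fromBlocks_apply₂₂]
    simp only [NF, of_apply, eqv_val1, ne_eq, EmbeddingLike.apply_eq_iff_eq, Sum.inr.injEq,
      Fin.ext_iff]
    refine if_congr ?_ rfl rfl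
    constructor <;> rintro ⟨h1, h2, h3, h4⟩ <;> exact ⟨by omega, by omega, by omega, by omega⟩

def subM {n m : ℕ} (e : Fin n ≃ Fin 2 ⊕ Fin m) (M₂ : Matrix (Fin n) (Fin n) (ZMod 2)) :
    Matrix (Fin m) (Fin m) (ZMod 2) :=
  Matrix.of fun s t => M₂ (e.symm (Sum.inr s)) (e.symm (Sum.inr t))

/-! ### The main induction -/

lemma claimA : ∀ n : ℕ, ∀ M : Matrix (Fin n) (Fin n) (ZMod 2), Mᵀ = M → (∀ i, M i i = 0) →
    ∃ k, 2*k ≤ n ∧ ∃ L : Matrix (Fin n) (Fin n) (ZMod 2), IsUnit L ∧ L * M * Lᵀ = NF n k := by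
  intro n
  induction n using Nat.strong_induction_on with
  | _ n IH =>
  intro M hs hd
  by_cases h0 : M = 0
  · refine ⟨0, by omega, 1, isUnit_one, ?_⟩
    subst h0
    ext i j
    simp [NF]
  · -- find a nonzero entry
    have hex : ∃ i j, M i j ≠ 0 := by
      by_contra hc
      push_neg at hc
      exact h0 (by ext i j; rw [hc i j, Matrix.zero_apply])
    obtain ⟨i, j, hij0⟩ := hex
    have hij : i ≠ j := by
      rintro rfl
      exact hij0 (hd i)
    have hMij : M i j = 1 := by
      have : ∀ x : ZMod 2, x ≠ 0 → x = 1 := by decide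
      exact this _ hij0
    have hn2 : 2 ≤ n := by
      have h1 := i.isLt
      have h2 := j.isLt
      have h3 : (i : ℕ) ≠ (j : ℕ) := fun h => hij (Fin.ext h)
      omega
    obtain ⟨m, hn⟩ : ∃ m, n = 2 + m := ⟨n - 2, by omega⟩
    set e : Fin n ≃ Fin 2 ⊕ Fin m := eqv m hn with he
    set e0 : Fin n := e.symm (Sum.inl 0) with he0
    set e1 : Fin n := e.symm (Sum.inl 1) with he1
    have hne : e0 ≠ e1 := by
      rw [he0, he1]
      intro h
      have := e.symm.injective h
      simp at this
    -- the permutation sending e0 ↦ i, e1 ↦ j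
    set τ₁ : Equiv.Perm (Fin n) := Equiv.swap e0 i with hτ₁
    set τ₂ : Equiv.Perm (Fin n) := Equiv.swap e1 (τ₁ j) with hτ₂
    set σ : Equiv.Perm (Fin n) := τ₂.trans τ₁ with hσ
    have hσ0 : σ e0 = i := by
      rw [hσ, Equiv.trans_apply, hτ₂]
      rw [Equiv.swap_apply_of_ne_of_ne hne (fun h => hij ?_), hτ₁, Equiv.swap_apply_left]
      have : τ₁ e0 = τ₁ (τ₁ j) := congrArg τ₁ h
      rw [Equiv.swap_apply_self] at this
      rw [hτ₁, Equiv.swap_apply_left] at this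
      exact this
    have hσ1 : σ e1 = j := by
      rw [hσ, Equiv.trans_apply, hτ₂, Equiv.swap_apply_left, Equiv.swap_apply_self]
    set M₁ : Matrix (Fin n) (Fin n) (ZMod 2) := M.submatrix ⇑σ ⇑σ with hM₁
    have hs₁ : M₁ᵀ = M₁ := by
      rw [hM₁, transpose_submatrix, hs]
    have hd₁ : ∀ x, M₁ x x = 0 := fun x => hd (σ x)
    have h01 : M₁ e0 e1 = 1 := by
      rw [hM₁, submatrix_apply, hσ0, hσ1, hMij]
    have h10 : M₁ e1 e0 = 1 := by
      rw [← show M₁ᵀ e1 e0 = M₁ e1 e0 from congrFun (congrFun hs₁ e1) e0]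
      exact h01
    -- the clearing matrix
    set L1 : Matrix (Fin n) (Fin n) (ZMod 2) := L1m M₁ e0 e1 with hL1
    set M₂ : Matrix (Fin n) (Fin n) (ZMod 2) := L1 * M₁ * L1ᵀ with hM₂
    have hs₂ : M₂ᵀ = M₂ := congr_symm L1 M₁ hs₁
    have hd₂ : ∀ x, M₂ x x = 0 := congr_diag L1 M₁ hs₁ hd₁
    have hsym₂ : ∀ x y, M₂ y x = M₂ x y := fun x y => (congrFun (congrFun hs₂ y) x).symm
    have hf1 : ∀ x y, (x = e0 ∨ x = e1) → (y = e0 ∨ y = e1) → M₂ x y = M₁ x y := by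
      intro x y hx hy
      rw [hM₂, hL1]
      exact fact1 M₁ e0 e1 x y hx hy
    have hf2 : ∀ a, a ≠ e0 → a ≠ e1 → M₂ a e0 = 0 ∧ M₂ a e1 = 0 := by
      intro a h1 h2
      rw [hM₂, hL1]
      exact fact2 M₁ hs₁ hd₁ e0 e1 hne h01 a h1 h2
    have hL1U : IsUnit L1 := by
      refine (Matrix.isUnit_iff_isUnit_det _).mpr (Matrix.isUnit_det_of_right_inverse (B := L1) ?_)
      rw [hL1]
      exact L1_sq M₁ e0 e1
    have hinr0 : ∀ t : Fin m, e.symm (Sum.inr t) ≠ e0 := by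
      intro t h
      rw [he0] at h
      have := e.symm.injective h
      simp at this
    have hinr1 : ∀ t : Fin m, e.symm (Sum.inr t) ≠ e1 := by
      intro t h
      rw [he1] at h
      have := e.symm.injective h
      simp at this
    have hx0 : e.symm (Sum.inl (0 : Fin 2)) = e0 := he0.symm
    have hx1 : e.symm (Sum.inl (1 : Fin 2)) = e1 := he1.symm
    -- block structure
    have hblock : M₂.submatrix ⇑e.symm ⇑e.symm = fromBlocks Jf 0 0 (subM e M₂) := by
      ext x y
      rcases x with s | s <;> rcases y with t | t
      · rw [submatrix_apply, fromBlocks_apply₁₁]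
        by_cases hst : s = t
        · rw [hst, hd₂]
          simp [Jf]
        · have hs2 := s.isLt
          have ht2 := t.isLt
          have hvne : (s : ℕ) ≠ (t : ℕ) := fun h => hst (Fin.ext h)
          have hJ : Jf s t = 1 := by simp [Jf, hst]
          rw [hJ]
          rcases (by omega : ((s : ℕ) = 0 ∧ (t : ℕ) = 1) ∨ ((s : ℕ) = 1 ∧ (t : ℕ) = 0)) with
            ⟨h1, h2⟩ | ⟨h1, h2⟩
          · rw [show s = 0 from Fin.ext (by simpa using h1),
              show t = 1 from Fin.ext (by simpa using h2), hx0, hx1,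
              hf1 e0 e1 (Or.inl rfl) (Or.inr rfl), h01]
          · rw [show s = 1 from Fin.ext (by simpa using h1),
              show t = 0 from Fin.ext (by simpa using h2), hx0, hx1,
              hf1 e1 e0 (Or.inr rfl) (Or.inl rfl), h10]
      · rw [submatrix_apply, fromBlocks_apply₁₂, Matrix.zero_apply, hsym₂]
        have hs2 := s.isLt
        rcases (by omega : ((s : ℕ) = 0) ∨ ((s : ℕ) = 1)) with h1 | h1
        · rw [show s = 0 from Fin.ext (by simpa using h1), hx0]
          exact (hf2 _ (hinr0 t) (hinr1 t)).1
        · rw [show s = 1 from Fin.ext (by simpa using h1), hx1]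
          exact (hf2 _ (hinr0 t) (hinr1 t)).2
      · rw [submatrix_apply, fromBlocks_apply₂₁, Matrix.zero_apply]
        have ht2 := t.isLt
        rcases (by omega : ((t : ℕ) = 0) ∨ ((t : ℕ) = 1)) with h1 | h1
        · rw [show t = 0 from Fin.ext (by simpa using h1), hx0]
          exact (hf2 _ (hinr0 s) (hinr1 s)).1
        · rw [show t = 1 from Fin.ext (by simpa using h1), hx1]
          exact (hf2 _ (hinr0 s) (hinr1 s)).2
      · rfl
    -- induction hypothesis
    have hsubs : (subM e M₂)ᵀ = subM e M₂ := by
      ext s t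
      rw [transpose_apply]
      exact hsym₂ _ _
    have hsubd : ∀ s, subM e M₂ s s = 0 := fun s => hd₂ _
    obtain ⟨k', hk', L', hLu', hL'⟩ := IH m (by omega) (subM e M₂) hsubs hsubd
    -- assemble
    set Big : Matrix (Fin 2 ⊕ Fin m) (Fin 2 ⊕ Fin m) (ZMod 2) :=
      fromBlocks 1 0 0 L' with hBigdef
    have hBigU : IsUnit Big := by
      obtain ⟨u, hu⟩ := hLu'
      refine (Matrix.isUnit_iff_isUnit_det _).mpr (Matrix.isUnit_det_of_right_inverse
        (B := fromBlocks 1 0 0 (↑u⁻¹ : Matrix (Fin m) (Fin m) (ZMod 2))) ?_)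
      rw [hBigdef, fromBlocks_multiply]
      simp only [Matrix.one_mul, Matrix.mul_one, Matrix.mul_zero, Matrix.zero_mul,
        add_zero, zero_add]
      rw [← hu, Units.mul_inv, fromBlocks_one]
    have hBig : Big * (fromBlocks Jf 0 0 (subM e M₂)) * Bigᵀ
        = fromBlocks Jf 0 0 (NF m k') := by
      rw [hBigdef, fromBlocks_transpose, transpose_one, transpose_zero, transpose_zero,
        fromBlocks_multiply, fromBlocks_multiply]
      simp only [Matrix.one_mul, Matrix.mul_one, Matrix.mul_zero, Matrix.zero_mul,
        add_zero, zero_add]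
      rw [hL']
    set L2 : Matrix (Fin n) (Fin n) (ZMod 2) := Big.submatrix ⇑e ⇑e with hL2def
    have hM2eq : M₂ = (fromBlocks Jf 0 0 (subM e M₂)).submatrix ⇑e ⇑e := by
      rw [← hblock, submatrix_submatrix]
      have h1 : ⇑e.symm ∘ ⇑e = id := by
        funext x; simp
      rw [h1, submatrix_id_id]
    have hL2U : IsUnit L2 := by
      obtain ⟨v, hv⟩ := hBigU
      refine (Matrix.isUnit_iff_isUnit_det _).mpr (Matrix.isUnit_det_of_right_inverse
        (B := (↑v⁻¹ : Matrix (Fin 2 ⊕ Fin m) (Fin 2 ⊕ Fin m) (ZMod 2)).submatrix ⇑e ⇑e) ?_)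
      rw [hL2def, submatrix_mul_equiv, ← hv, Units.mul_inv]
      exact submatrix_one_equiv e
    have hM3 : L2 * M₂ * L2ᵀ = NF n (k'+1) := by
      rw [hL2def, hM2eq, transpose_submatrix, submatrix_mul_equiv, submatrix_mul_equiv, hBig]
      exact final_reindex m k' hn
    -- the permutation matrix
    set P : Matrix (Fin n) (Fin n) (ZMod 2) := σ.toPEquiv.toMatrix with hPdef
    have hPt : Pᵀ = σ.symm.toPEquiv.toMatrix := by
      rw [hPdef, Equiv.toPEquiv_symm, PEquiv.toMatrix_symm]
    have hPinv : P * Pᵀ = 1 := by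
      rw [hPt, hPdef, ← PEquiv.toMatrix_trans, ← Equiv.toPEquiv_trans, Equiv.self_trans_symm]
      simp
    have hPU : IsUnit P := (Matrix.isUnit_iff_isUnit_det _).mpr (Matrix.isUnit_det_of_right_inverse hPinv)
    have hM1 : P * M * Pᵀ = M₁ := by
      rw [hPt, hPdef, PEquiv.toMatrix_toPEquiv_mul, PEquiv.mul_toMatrix_toPEquiv, Equiv.symm_symm,
        submatrix_submatrix, Function.comp_id, Function.id_comp, hM₁]
    refine ⟨k' + 1, by omega, L2 * L1 * P, (hL2U.mul hL1U).mul hPU, ?_⟩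
    have hLtot : (L2 * L1 * P) * M * (L2 * L1 * P)ᵀ
        = L2 * (L1 * (P * M * Pᵀ) * L1ᵀ) * L2ᵀ := by
      simp only [transpose_mul, Matrix.mul_assoc]
    rw [hLtot, hM1, ← hM₂, hM3]

end SZD

open SZD in
/-- A symmetric matrix with zero diagonal over `ZMod 2` has even rank `r` and is congruent,
via an invertible matrix `L`, to the block-diagonal matrix consisting of `r/2` copies of the
`2×2` block `[[0,1],[1,0]]` followed by a zero block.  (The entry of the normal form at
`(i,j)` is `1` exactly when `i,j < r`, `i` and `j` belong to the same `2×2` block, and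
`i ≠ j`.) -/
theorem symm_zero_diag_normal_form {d : ℕ}
    (M : Matrix (Fin d) (Fin d) (ZMod 2)) (hsymm : Mᵀ = M) (hdiag : ∀ i, M i i = 0) :
    Even M.rank ∧
    ∃ L : Matrix (Fin d) (Fin d) (ZMod 2), IsUnit L ∧
      L * M * Lᵀ = Matrix.of (fun i j : Fin d =>
        if (i : ℕ) < M.rank ∧ (j : ℕ) < M.rank ∧ (i : ℕ) / 2 = (j : ℕ) / 2 ∧ i ≠ j
        then 1 else 0) := by
  obtain ⟨k, hk, L, hLU, hL⟩ := claimA d M hsymm hdiag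
  have hdetL : IsUnit L.det := (Matrix.isUnit_iff_isUnit_det L).mp hLU
  have hdetLt : IsUnit Lᵀ.det := by rwa [Matrix.det_transpose]
  have hrank : M.rank = 2 * k := by
    have h1 : (L * M * Lᵀ).rank = M.rank := by
      rw [Matrix.rank_mul_eq_left_of_isUnit_det Lᵀ (L * M) hdetLt,
        Matrix.rank_mul_eq_right_of_isUnit_det L M hdetL]
    rw [← h1, hL, rank_NF d k hk]
  constructor
  · rw [hrank]
    exact ⟨k, by omega⟩
  · refine ⟨L, hLU, ?_⟩
    rw [hrank]
    exact hL
end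

section
/- Let M be a d × d matrix over ZMod 2 that is symmetric with zero diagonal, let r = rank(M) (which is even), and set m = d − r/2 = r/2 + (d − r). Then there exist vectors v_1, …, v_d in (ZMod 2)^m × (ZMod 2)^m such that ω(v_i, v_j) = M_{ij} for all i, j, where ω is the standard symplectic form on (ZMod 2)^m × (ZMod 2)^m. (That is, any admissible commutation matrix of d Pauli generators can be realized by Pauli operators on m = ½r + (d − r) qubits.) -/
open Matrix

/-- The phase space `V = (ZMod 2)^n × (ZMod 2)^n` of symplectic representations of
`n`-qubit Pauli strings. -/
abbrev SympV (n : ℕ) := (Fin n → ZMod 2) × (Fin n → ZMod 2)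

/-- The standard symplectic form `ω((a,b),(a',b')) = a·b' + b·a'` on
`(ZMod 2)^n × (ZMod 2)^n`, dot products taken mod 2. -/
def symp {n : ℕ} (u v : SympV n) : ZMod 2 :=
  u.1 ⬝ᵥ v.2 + u.2 ⬝ᵥ v.1

/-- The symplectic orthogonal complement `W^⊥ = {u : ω(u,w) = 0 for all w ∈ W}`. -/
def sympPerp {n : ℕ} (W : Submodule (ZMod 2) (SympV n)) : Submodule (ZMod 2) (SympV n) where
  carrier := {u | ∀ w ∈ W, symp u w = 0}
  zero_mem' := by
    intro w hw
    simp [symp]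
  add_mem' := by
    intro a b ha hb w hw
    have h : symp (a + b) w = symp a w + symp b w := by
      simp only [symp, Prod.fst_add, Prod.snd_add, add_dotProduct]
      ring
    rw [h, ha w hw, hb w hw, add_zero]
  smul_mem' := by
    intro c u hu w hw
    have h : symp (c • u) w = c • symp u w := by
      simp only [symp, Prod.smul_fst, Prod.smul_snd, smul_dotProduct, smul_add]
    rw [h, hu w hw, smul_zero]

lemma zmod2_eq_one_of_ne_zero : ∀ {a : ZMod 2}, a ≠ 0 → a = 1 := by decide

lemma symp_decomp : ∀ (n : ℕ) (V : Type) [AddCommGroup V] [Module (ZMod 2) V]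
    [FiniteDimensional (ZMod 2) V],
    Module.finrank (ZMod 2) V ≤ n →
    ∀ (B : V →ₗ[ZMod 2] V →ₗ[ZMod 2] ZMod 2),
    (∀ x y, B x y = B y x) → (∀ x, B x x = 0) →
    ∃ (g : ℕ) (e f : Fin g → V),
      (∀ i j, B (e i) (e j) = 0) ∧
      (∀ i j, B (f i) (f j) = 0) ∧
      (∀ i j, B (e i) (f j) = if i = j then 1 else 0) ∧
      (∀ x y, B x y = (∑ i, B x (f i) * B (e i) y) + ∑ i, B x (e i) * B (f i) y) := by
  intro n
  induction n with
  | zero =>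
    intro V _ _ _ hn B hs ha
    have hsub : Subsingleton V := by
      rw [← Module.finrank_zero_iff (R := ZMod 2)]
      omega
    refine ⟨0, finZeroElim, finZeroElim, fun i => i.elim0, fun i => i.elim0,
      fun i => i.elim0, fun x y => ?_⟩
    have : x = 0 := Subsingleton.elim x 0
    simp [this]
  | succ n ih =>
    intro V _ _ _ hn B hs ha
    by_cases hB : ∀ x y, B x y = 0
    · exact ⟨0, finZeroElim, finZeroElim, fun i => i.elim0, fun i => i.elim0,
        fun i => i.elim0, fun x y => by simp [hB]⟩
    push_neg at hB
    obtain ⟨u, w, hw⟩ := hB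
    have huw : B u w = 1 := zmod2_eq_one_of_ne_zero hw
    have hwu : B w u = 1 := by rw [hs w u]; exact huw
    set W : Submodule (ZMod 2) V := LinearMap.ker (B u) ⊓ LinearMap.ker (B w) with hWdef
    have hmemW : ∀ v : V, v ∈ W ↔ B u v = 0 ∧ B w v = 0 := by
      intro v; simp [hWdef, LinearMap.mem_ker]
    have huW : u ∉ W := by
      intro h
      have := ((hmemW u).1 h).2
      rw [hwu] at this
      exact one_ne_zero this
    have hWlt : W < ⊤ := lt_top_iff_ne_top.2 (fun h => huW (h ▸ Submodule.mem_top))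
    have hfr : Module.finrank (ZMod 2) W ≤ n := by
      have := Submodule.finrank_lt (K := ZMod 2) (V := V) hWlt.ne
      omega
    let BW : W →ₗ[ZMod 2] W →ₗ[ZMod 2] ZMod 2 := (B.domRestrict W).compl₂ W.subtype
    have hBW : ∀ x y : W, BW x y = B (x : V) (y : V) := fun x y => rfl
    obtain ⟨g, e, f, hee, hff, hef, hkey⟩ := ih W hfr BW
      (fun x y => by rw [hBW, hBW]; exact hs _ _) (fun x => by rw [hBW]; exact ha _)
    -- membership facts
    have heu : ∀ i, B u ((e i : V)) = 0 := fun i => ((hmemW _).1 (e i).2).1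
    have hew : ∀ i, B w ((e i : V)) = 0 := fun i => ((hmemW _).1 (e i).2).2
    have hfu : ∀ i, B u ((f i : V)) = 0 := fun i => ((hmemW _).1 (f i).2).1
    have hfw : ∀ i, B w ((f i : V)) = 0 := fun i => ((hmemW _).1 (f i).2).2
    refine ⟨g + 1, Fin.cons u (fun i => (e i : V)), Fin.cons w (fun i => (f i : V)),
      ?_, ?_, ?_, ?_⟩
    · intro i j
      refine Fin.cases ?_ (fun i => ?_) i <;> refine Fin.cases ?_ (fun j => ?_) j <;>
          simp only [Fin.cons_zero, Fin.cons_succ]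
      · exact ha u
      · exact heu j
      · rw [hs]; exact heu i
      · have := hee i j; rwa [hBW] at this
    · intro i j
      refine Fin.cases ?_ (fun i => ?_) i <;> refine Fin.cases ?_ (fun j => ?_) j <;>
          simp only [Fin.cons_zero, Fin.cons_succ]
      · exact ha w
      · exact hfw j
      · rw [hs]; exact hfw i
      · have := hff i j; rwa [hBW] at this
    · intro i j
      refine Fin.cases ?_ (fun i => ?_) i <;> refine Fin.cases ?_ (fun j => ?_) j <;>
          simp only [Fin.cons_zero, Fin.cons_succ]
      · simp [huw]
      · rw [if_neg (Ne.symm (Fin.succ_ne_zero j))]; exact hfu j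
      · rw [if_neg (Fin.succ_ne_zero i), hs]; exact hew i
      · have := hef i j; rw [hBW] at this
        simpa [Fin.succ_inj] using this
    · intro x y
      have hxW : x - B x w • u - B x u • w ∈ W := by
        rw [hmemW]
        refine ⟨?_, ?_⟩
        · simp only [_root_.map_sub, _root_.map_smul, smul_eq_mul, ha u, huw, mul_zero, mul_one]
          rw [hs u x]; ring
        · simp only [_root_.map_sub, _root_.map_smul, smul_eq_mul, ha w, hwu, mul_zero, mul_one]
          rw [hs w x]; ring
      have hyW : y - B y w • u - B y u • w ∈ W := by
        rw [hmemW]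
        refine ⟨?_, ?_⟩
        · simp only [_root_.map_sub, _root_.map_smul, smul_eq_mul, ha u, huw, mul_zero, mul_one]
          rw [hs u y]; ring
        · simp only [_root_.map_sub, _root_.map_smul, smul_eq_mul, ha w, hwu, mul_zero, mul_one]
          rw [hs w y]; ring
      set x' : W := ⟨_, hxW⟩ with hx'def
      set y' : W := ⟨_, hyW⟩ with hy'def
      have hmain := hkey x' y'
      rw [hBW] at hmain
      -- rewrite the B-values appearing in hmain
      have hxf : ∀ i, B (x' : V) ((f i : V)) = B x ((f i : V)) := by
        intro i
        simp only [hx'def, _root_.map_sub, LinearMap.sub_apply, _root_.map_smul, LinearMap.smul_apply,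
          smul_eq_mul, hfu i, hfw i, mul_zero, sub_zero]
      have hxe : ∀ i, B (x' : V) ((e i : V)) = B x ((e i : V)) := by
        intro i
        simp only [hx'def, _root_.map_sub, LinearMap.sub_apply, _root_.map_smul, LinearMap.smul_apply,
          smul_eq_mul, heu i, hew i, mul_zero, sub_zero]
      have hyf : ∀ i, B ((f i : V)) (y' : V) = B ((f i : V)) y := by
        intro i
        rw [hs _ (y' : V), hs _ y]
        simp only [hy'def, _root_.map_sub, LinearMap.sub_apply, _root_.map_smul, LinearMap.smul_apply,
          smul_eq_mul, hfu i, hfw i, mul_zero, sub_zero]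
      have hye : ∀ i, B ((e i : V)) (y' : V) = B ((e i : V)) y := by
        intro i
        rw [hs _ (y' : V), hs _ y]
        simp only [hy'def, _root_.map_sub, LinearMap.sub_apply, _root_.map_smul, LinearMap.smul_apply,
          smul_eq_mul, heu i, hew i, mul_zero, sub_zero]
      have hexp : B (x' : V) (y' : V)
          = B x y - B y w * B x u - B y u * B x w := by
        simp only [hx'def, hy'def, _root_.map_sub, LinearMap.sub_apply, _root_.map_smul,
          LinearMap.smul_apply, smul_eq_mul, ha u, ha w, huw, hwu,
          mul_zero, mul_one]
        rw [hs u y, hs w y]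
        ring
      rw [Fin.sum_univ_succ, Fin.sum_univ_succ]
      simp only [Fin.cons_zero, Fin.cons_succ]
      have hsum : (∑ i, B x ((f i : V)) * B ((e i : V)) y)
            + ∑ i, B x ((e i : V)) * B ((f i : V)) y
          = B x y - B y w * B x u - B y u * B x w := by
        rw [← hexp, hmain]
        congr 1
        · exact Finset.sum_congr rfl fun i _ => by
            rw [hBW, hBW, hxf i, hye i]
        · exact Finset.sum_congr rfl fun i _ => by
            rw [hBW, hBW, hxe i, hyf i]
      rw [hs u y, hs w y]
      linear_combination -hsum

lemma pad_dot {g m : ℕ} (hgm : g ≤ m) (a b : Fin g → ZMod 2) :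
    (fun j : Fin m => if h : (j : ℕ) < g then a ⟨j, h⟩ else 0) ⬝ᵥ
      (fun j : Fin m => if h : (j : ℕ) < g then b ⟨j, h⟩ else 0) = a ⬝ᵥ b := by
  classical
  have h1 : ∀ j : Fin m,
      (if h : (j : ℕ) < g then a ⟨j, h⟩ else 0) * (if h : (j : ℕ) < g then b ⟨j, h⟩ else 0)
        = (fun jn : ℕ => if h : jn < g then a ⟨jn, h⟩ * b ⟨jn, h⟩ else 0) (j : ℕ) := by
    intro j; by_cases h : (j : ℕ) < g <;> simp [h]
  show (∑ j : Fin m, _) = ∑ j : Fin g, a j * b j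
  rw [Finset.sum_congr rfl (fun j _ => h1 j),
    Fin.sum_univ_eq_sum_range (fun jn : ℕ => if h : jn < g then a ⟨jn, h⟩ * b ⟨jn, h⟩ else 0) m]
  rw [← Finset.sum_subset (Finset.range_subset_range.2 hgm)
    (fun j _ hj => dif_neg (by simpa using hj))]
  rw [← Fin.sum_univ_eq_sum_range]
  exact Finset.sum_congr rfl fun j _ => by simp


set_option maxHeartbeats 1000000 in
/-- Any symmetric matrix `M` with zero diagonal over `ZMod 2` (a commutation matrix of `d`
Pauli generators) of rank `r` can be realized as the Gram matrix of the standard symplectic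
form on `m = r/2 + (d − r)` qubits: there are vectors `v_1, …, v_d` in
`(ZMod 2)^m × (ZMod 2)^m` with `ω(v_i, v_j) = M_{ij}`. -/
theorem commutation_matrix_realizable {d : ℕ}
    (M : Matrix (Fin d) (Fin d) (ZMod 2)) (hsymm : Mᵀ = M) (hdiag : ∀ i, M i i = 0) :
    ∃ v : Fin d → SympV (M.rank / 2 + (d - M.rank)),
      ∀ i j, symp (v i) (v j) = M i j := by
  classical
  have h2 : ∀ a : ZMod 2, a + a = 0 := by decide
  have hMsym : ∀ i j, M j i = M i j := fun i j => by
    have h := congrFun (congrFun hsymm j) i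
    exact (show M i j = M j i from h).symm
  set B : (Fin d → ZMod 2) →ₗ[ZMod 2] (Fin d → ZMod 2) →ₗ[ZMod 2] ZMod 2 :=
    Matrix.toLinearMap₂' (ZMod 2) M with hBdef
  have hBapp : ∀ x y, B x y = x ⬝ᵥ M *ᵥ y := fun x y => Matrix.toLinearMap₂'_apply' M x y
  have hs : ∀ x y, B x y = B y x := by
    intro x y
    rw [hBapp, hBapp, Matrix.dotProduct_mulVec]
    conv_lhs => rw [← hsymm, Matrix.vecMul_transpose]
    rw [dotProduct_comm]
  have ha : ∀ x, B x x = 0 := by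
    intro x
    rw [hBapp]
    have hx : x ⬝ᵥ M *ᵥ x
        = ∑ p ∈ Finset.univ ×ˢ Finset.univ, x p.1 * (M p.1 p.2 * x p.2) := by
      rw [Finset.sum_product]
      simp [dotProduct, Matrix.mulVec, Finset.mul_sum]
    rw [hx]
    refine Finset.sum_ninvolution Prod.swap ?_ ?_ (fun p => Finset.mem_univ _) ?_
    · intro p
      show x p.1 * (M p.1 p.2 * x p.2) + x p.2 * (M p.2 p.1 * x p.1) = 0
      rw [hMsym p.1 p.2, show x p.2 * (M p.1 p.2 * x p.1) = x p.1 * (M p.1 p.2 * x p.2) by ring]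
      exact h2 _
    · intro p hp hswap
      apply hp
      have : p.1 = p.2 := by
        have h' := congrArg Prod.fst hswap
        simpa using h'.symm
      rw [this, hdiag]
      ring
    · intro p; simp
  have hfr : Module.finrank (ZMod 2) (Fin d → ZMod 2) ≤ d := by
    rw [Module.finrank_fin_fun]
  obtain ⟨g, e, f, hee, hff, hef, hkey⟩ :=
    symp_decomp d (Fin d → ZMod 2) hfr B hs ha
  -- the coordinates
  set A : Fin d → Fin g → ZMod 2 := fun i t => B (Pi.single i 1) (f t) with hAdef
  set Bv : Fin d → Fin g → ZMod 2 := fun i t => B (Pi.single i 1) (e t) with hBvdef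
  have hsingle : ∀ i j, B (Pi.single i 1) (Pi.single j 1) = M i j := by
    intro i j
    rw [hBapp]
    simp [dotProduct, Matrix.mulVec, Pi.single_apply, Finset.mul_sum,
      Finset.sum_ite_eq, Finset.sum_ite_eq']
  have hMij : ∀ i j, M i j = (∑ t, A i t * Bv j t) + ∑ t, Bv i t * A j t := by
    intro i j
    rw [← hsingle i j, hkey (Pi.single i 1) (Pi.single j 1)]
    congr 1
    · exact Finset.sum_congr rfl fun t _ => by rw [hs (e t) (Pi.single j 1)]
    · exact Finset.sum_congr rfl fun t _ => by rw [hs (f t) (Pi.single j 1)]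
  -- rank computation
  have hrank : M.rank = g + g := by
    have hupper : M.rank ≤ g + g := by
      set P : Matrix (Fin d) (Fin g ⊕ Fin g) (ZMod 2) :=
        Matrix.of fun i s => Sum.elim (A i) (Bv i) s with hP
      set Q : Matrix (Fin g ⊕ Fin g) (Fin d) (ZMod 2) :=
        Matrix.of fun s j => Sum.elim (Bv j) (A j) s with hQ
      have hM : M = P * Q := by
        ext i j
        rw [Matrix.mul_apply, Fintype.sum_sum_type]
        simpa [hP, hQ] using hMij i j
      calc M.rank ≤ P.rank := hM ▸ Matrix.rank_mul_le_left P Q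
        _ ≤ Fintype.card (Fin g ⊕ Fin g) := Matrix.rank_le_card_width P
        _ = g + g := by simp
    have hlower : g + g ≤ M.rank := by
      set C : Matrix (Fin d) (Fin g ⊕ Fin g) (ZMod 2) :=
        Matrix.of fun k s => Sum.elim (fun t => e t k) (fun t => f t k) s with hC
      have hent : ∀ s t, (Cᵀ * M * C) s t
          = B (fun k => C k s) (fun k => C k t) := by
        intro s t
        rw [hBapp]
        simp only [Matrix.mul_apply, Matrix.transpose_apply, dotProduct,
          Matrix.mulVec, Finset.sum_mul, Finset.mul_sum]
        rw [Finset.sum_comm]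
        exact Finset.sum_congr rfl fun i _ => Finset.sum_congr rfl fun j _ => by ring
      have hJ : Cᵀ * M * C = Matrix.fromBlocks 0 1 1 0 := by
        ext s t
        rcases s with s | s <;> rcases t with t | t <;>
          rw [hent] <;>
          simp only [hC, Matrix.of_apply, Sum.elim_inl, Sum.elim_inr]
        · simpa [Matrix.fromBlocks] using hee s t
        · have := hef s t
          simpa [Matrix.fromBlocks, Matrix.one_apply] using this
        · have : B (f s) (e t) = if t = s then 1 else 0 := by
            rw [hs (f s) (e t)]
            exact hef t s
          simpa [Matrix.fromBlocks, Matrix.one_apply, eq_comm] using this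
        · simpa [Matrix.fromBlocks] using hff s t
      have hJmul : (Matrix.fromBlocks 0 1 1 0 : Matrix (Fin g ⊕ Fin g) (Fin g ⊕ Fin g) (ZMod 2)) *
          (Matrix.fromBlocks 0 1 1 0 : Matrix (Fin g ⊕ Fin g) (Fin g ⊕ Fin g) (ZMod 2)) = 1 := by
        rw [Matrix.fromBlocks_multiply]
        simp [Matrix.fromBlocks_one]
      have hunit : IsUnit (Cᵀ * M * C) := by
        rw [hJ]
        exact ⟨⟨_, _, hJmul, hJmul⟩, rfl⟩
      have := Matrix.rank_of_isUnit _ hunit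
      calc g + g = Fintype.card (Fin g ⊕ Fin g) := by simp
        _ = (Cᵀ * M * C).rank := this.symm
        _ ≤ (M * C).rank := by
            rw [Matrix.mul_assoc]
            exact Matrix.rank_mul_le_right _ _
        _ ≤ M.rank := Matrix.rank_mul_le_left _ _
    omega
  have hm : g ≤ M.rank / 2 + (d - M.rank) := by omega
  set m := M.rank / 2 + (d - M.rank) with hmdef
  refine ⟨fun i => ⟨fun j => if h : (j : ℕ) < g then A i ⟨j, h⟩ else 0,
    fun j => if h : (j : ℕ) < g then Bv i ⟨j, h⟩ else 0⟩, ?_⟩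
  intro i j
  show (_ ⬝ᵥ _) + (_ ⬝ᵥ _) = M i j
  rw [pad_dot hm, pad_dot hm, hMij i j]
  rfl
end

section
/- Let T be a tree on n ≥ 1 vertices with edge set E (so |E| = n − 1), and let M be the (2n−1) × (2n−1) matrix over ZMod 2 indexed by the disjoint union of vertices and edges, with M(v, e) = M(e, v) = 1 exactly when vertex v is an endpoint of edge e, and all other entries (vertex-vertex and edge-edge) equal to 0. Then rank(M) = 2(n − 1), and hence dim(M) − rank(M) = 1. (The commutation matrix of the independent generating set {Z_v : v a vertex} ∪ {X_i X_j : (i,j) a tree edge} of one spin species of the Jordan–Wigner-encoded Hubbard model on a connected lattice has a one-dimensional isotropic subspace, so the Hubbard model has exactly one Pauli conserved charge per spin species, i.e. two in total.) -/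
open Matrix

section BlockRank

variable {F : Type*} [Field F] {m n : Type*} [Fintype m] [Fintype n]

lemma mem_ker_fromBlocks_iff (B : Matrix m n F) (C : Matrix n m F)
    (x : m ⊕ n → F) :
    x ∈ LinearMap.ker (fromBlocks 0 B C 0).mulVecLin ↔
      C *ᵥ (x ∘ Sum.inl) = 0 ∧ B *ᵥ (x ∘ Sum.inr) = 0 := by
  rw [LinearMap.mem_ker, mulVecLin_apply, fromBlocks_mulVec]
  simp only [zero_mulVec, zero_add, add_zero, funext_iff, Sum.forall,
    Sum.elim_inl, Sum.elim_inr, Pi.zero_apply]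
  tauto

noncomputable def kerFromBlocksEquiv (B : Matrix m n F) (C : Matrix n m F) :
    LinearMap.ker (fromBlocks 0 B C 0).mulVecLin ≃ₗ[F]
      LinearMap.ker C.mulVecLin × LinearMap.ker B.mulVecLin where
  toFun x := (⟨x.1 ∘ Sum.inl, by
      have h := ((mem_ker_fromBlocks_iff B C x.1).1 x.2).1
      rw [LinearMap.mem_ker, mulVecLin_apply]; exact h⟩,
    ⟨x.1 ∘ Sum.inr, by
      have h := ((mem_ker_fromBlocks_iff B C x.1).1 x.2).2
      rw [LinearMap.mem_ker, mulVecLin_apply]; exact h⟩)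
  invFun y := ⟨Sum.elim y.1.1 y.2.1, by
    rw [mem_ker_fromBlocks_iff]
    constructor
    · rw [Sum.elim_comp_inl]
      have h := LinearMap.mem_ker.mp y.1.2
      rw [mulVecLin_apply] at h; exact h
    · rw [Sum.elim_comp_inr]
      have h := LinearMap.mem_ker.mp y.2.2
      rw [mulVecLin_apply] at h; exact h⟩
  map_add' x y := rfl
  map_smul' c x := rfl
  left_inv x := Subtype.ext (funext fun i => by cases i <;> rfl)
  right_inv y := by ext i <;> rfl

lemma rank_fromBlocks_antidiag (B : Matrix m n F) (C : Matrix n m F) :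
    (fromBlocks 0 B C 0).rank = B.rank + C.rank := by
  have hN := (fromBlocks 0 B C 0).mulVecLin.finrank_range_add_finrank_ker
  have hB := B.mulVecLin.finrank_range_add_finrank_ker
  have hC := C.mulVecLin.finrank_range_add_finrank_ker
  have hker : Module.finrank F (LinearMap.ker (fromBlocks 0 B C 0).mulVecLin)
      = Module.finrank F (LinearMap.ker C.mulVecLin)
        + Module.finrank F (LinearMap.ker B.mulVecLin) := by
    rw [(kerFromBlocksEquiv B C).finrank_eq, Module.finrank_prod]
  simp only [Module.finrank_pi, Fintype.card_sum] at hN hB hC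
  unfold Matrix.rank
  omega

end BlockRank

/-- Commutation matrix of the Hubbard-model generators for one spin species: for a tree
`T` on `n ≥ 1` vertices, the `(2n−1) × (2n−1)` matrix over `ZMod 2` indexed by vertices
and edges, whose only nonzero entries record vertex-edge incidence, has rank `2(n − 1)`;
hence `dim M − rank M = 1` (one conserved charge per spin species). -/
theorem hubbard_commutation_matrix_rank {V : Type*} [Fintype V] [DecidableEq V]
    (G : SimpleGraph V) [DecidableRel G.Adj] (hT : G.IsTree) (hn : 1 ≤ Fintype.card V)
    (M : Matrix (V ⊕ G.edgeSet) (V ⊕ G.edgeSet) (ZMod 2))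
    (hMve : ∀ (v : V) (e : G.edgeSet),
      M (Sum.inl v) (Sum.inr e) = if v ∈ (e : Sym2 V) then 1 else 0)
    (hMev : ∀ (v : V) (e : G.edgeSet),
      M (Sum.inr e) (Sum.inl v) = if v ∈ (e : Sym2 V) then 1 else 0)
    (hMvv : ∀ v w : V, M (Sum.inl v) (Sum.inl w) = 0)
    (hMee : ∀ e f : G.edgeSet, M (Sum.inr e) (Sum.inr f) = 0) :
    M.rank = 2 * (Fintype.card V - 1)
    ∧ (2 * Fintype.card V - 1) - M.rank = 1 := by
  classical
  have hne0 : Nonempty V := Fintype.card_pos_iff.mp hn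
  obtain ⟨u₀⟩ := hne0
  set A : Matrix G.edgeSet V (ZMod 2) :=
    fun e v => if v ∈ (e : Sym2 V) then 1 else 0 with hA
  have hM : M = fromBlocks 0 Aᵀ A 0 := by
    ext i j
    cases i with
    | inl v => cases j with
      | inl w => simpa [fromBlocks] using hMvv v w
      | inr e => simpa [fromBlocks, hA, transpose] using hMve v e
    | inr e => cases j with
      | inl v => simpa [fromBlocks, hA] using hMev v e
      | inr f => simpa [fromBlocks] using hMee e f
  -- the key sum computation
  have hsum : ∀ (x : V → ZMod 2) (u v : V), u ≠ v →
      ∑ w, (if w ∈ s(u, v) then (1 : ZMod 2) else 0) * x w = x u + x v := by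
    intro x u v huv
    have key : ∀ w, (if w ∈ s(u, v) then (1 : ZMod 2) else 0) * x w
        = (if w = u then x w else 0) + (if w = v then x w else 0) := by
      intro w
      by_cases h1 : w = u
      · subst h1
        simp only [Sym2.mem_iff, true_or, if_pos, one_mul, if_pos trivial]
        rw [if_neg huv, add_zero]
      · by_cases h2 : w = v
        · subst h2
          simp [Sym2.mem_iff, h1]
        · simp [Sym2.mem_iff, h1, h2]
    simp_rw [key]
    rw [Finset.sum_add_distrib]
    simp [Finset.sum_ite_eq']
  -- kernel of A consists of the constants
  have hker : LinearMap.ker A.mulVecLin = Submodule.span (ZMod 2) {(1 : V → ZMod 2)} := by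
    apply le_antisymm
    · intro x hx
      rw [LinearMap.mem_ker] at hx
      have hadj : ∀ u v : V, G.Adj u v → x u = x v := by
        intro u v huv
        have he : s(u, v) ∈ G.edgeSet := huv
        have h0 := congrFun hx (⟨s(u, v), he⟩ : G.edgeSet)
        have hne : u ≠ v := G.ne_of_adj huv
        have hval : (A *ᵥ x) (⟨s(u, v), he⟩ : G.edgeSet) = x u + x v := by
          simp only [mulVec, dotProduct, hA]
          exact hsum x u v hne
        rw [mulVecLin_apply] at h0
        rw [hval] at h0
        have : x u + x v = 0 := h0
        have h2 : x u = -(x v) := by linear_combination this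
        rwa [CharTwo.neg_eq] at h2
      have hconst : ∀ u v : V, x u = x v := by
        intro u v
        obtain ⟨w⟩ := hT.isConnected.preconnected u v
        induction w with
        | nil => rfl
        | cons h p ih => exact (hadj _ _ h).trans ih
      rw [Submodule.mem_span_singleton]
      exact ⟨x u₀, funext fun w => by simp [hconst u₀ w]⟩
    · rw [Submodule.span_le, Set.singleton_subset_iff, SetLike.mem_coe,
        LinearMap.mem_ker]
      funext e
      rcases e with ⟨e, he⟩
      induction e using Sym2.ind with
      | _ u v =>
        have hne : u ≠ v := G.ne_of_adj (G.mem_edgeSet.1 he)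
        have := hsum (fun _ => 1) u v hne
        rw [mulVecLin_apply]
        simp only [mulVecLin_apply, mulVec, dotProduct, hA, Pi.one_apply, Pi.zero_apply]
        rw [this]
        exact CharTwo.add_self_eq_zero 1
  have hkerdim : Module.finrank (ZMod 2) (LinearMap.ker A.mulVecLin) = 1 := by
    rw [hker]
    exact finrank_span_singleton (by
      intro h
      have := congrFun h u₀
      simp at this)
  have hrk := A.mulVecLin.finrank_range_add_finrank_ker
  rw [hkerdim, Module.finrank_pi] at hrk
  have hrankA : A.rank = Fintype.card V - 1 := by
    unfold Matrix.rank
    omega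
  have hrankM : M.rank = 2 * (Fintype.card V - 1) := by
    rw [hM, rank_fromBlocks_antidiag, rank_transpose, hrankA]
    ring
  exact ⟨hrankM, by omega⟩
end
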